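/- If the cocycle f is recurrent, then both sets R₊ = {x ∈ X : (x,e) lies in the closure of {T_f^n(x,e) : n > 0}} and R₋ = {x ∈ X : (x,e) lies in the closure of {T_f^n(x,e) : n < 0}} are comeager subsets of X (their complements are meager). -/

import Mathlib

/-!
Fix countable bases of `X` and `G`. For basic open sets `B ⊆ X` and `V ∋ e`, the points of `B`
whose orbit returns to `B × V` at a time in `P` form an open set, and recurrence makes it dense
in `B`: recurrence applied to `V ∩ V⁻¹` gives a return `(x, T^n x)`, and if `n ∉ P` then
`(T^n x, x)` is a return at time `-n ∈ P`. Hence each condition "`x ∈ B` implies a return to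
`B × V`" holds on a residual set, and the countable intersection of these sets consists of points
`x` with `(x, e)` in the closure of their orbit along `P`, for `P = {n > 0}` and `P = {n < 0}`.
-/

open Topology Pointwise Set Filter

section Defs

variable {X : Type*} [TopologicalSpace X] {G : Type*} [TopologicalSpace G] [Group G]

/-- The positive-iterate part of the cocycle generated by `f` over `T`:
`f(n,x) = f(T^{n-1}x) ⋯ f(Tx) · f(x)` for `n ≥ 1` and `f(0,x) = e`. -/
def cocycleNat (T : X ≃ₜ X) (f : X → G) : ℕ → X → G
  | 0, _ => 1
  | n + 1, x => f ((T.toEquiv ^ n) x) * cocycleNat T f n x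

/-- The cocycle generated by `f` over `T`, at integer times:
`f(n,x)` as above for `n ≥ 0` and `f(n,x) = f(-n, T^n x)⁻¹` for `n < 0`. -/
def cocycle (T : X ≃ₜ X) (f : X → G) (n : ℤ) (x : X) : G :=
  if 0 ≤ n then cocycleNat T f n.toNat x
  else (cocycleNat T f (-n).toNat ((T.toEquiv ^ n) x))⁻¹

/-- The `n`-th power of the skew product `T_f` on `X × G`:
`T_f^n (x,g) = (T^n x, f(n,x)·g)`. -/
def skewPow (T : X ≃ₜ X) (f : X → G) (n : ℤ) (p : X × G) : X × G :=
  ((T.toEquiv ^ n) p.1, cocycle T f n p.1 * p.2)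

/-- The `n`-th power of the skew product `T_f` acting on `X × G/H`:
`T_f^n (x, gH) = (T^n x, f(n,x)·gH)`. -/
def skewPowQ (T : X ≃ₜ X) (f : X → G) (H : Subgroup G) (n : ℤ) (p : X × (G ⧸ H)) :
    X × (G ⧸ H) :=
  ((T.toEquiv ^ n) p.1, cocycle T f n p.1 • p.2)

/-- The local essential range `E_x(f)`: all `g ∈ G` such that for every open
neighbourhood `U` of `x` and every open neighbourhood `V` of the identity there are
`n ∈ ℤ` and `y ∈ U ∩ T⁻ⁿU` with `f(n,y) ∈ V·g`. -/
def essRange (T : X ≃ₜ X) (f : X → G) (x : X) : Set G :=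
  {g | ∀ U : Set X, IsOpen U → x ∈ U → ∀ V : Set G, IsOpen V → (1 : G) ∈ V →
    ∃ n : ℤ, ∃ y ∈ U, (T.toEquiv ^ n) y ∈ U ∧ ∃ v ∈ V, cocycle T f n y = v * g}

/-- `P_x(f)`: the vertical section at `x` of the closure of the `T_f`-orbit of `(x,e)`. -/
def Pset (T : X ≃ₜ X) (f : X → G) (x : X) : Set G :=
  {g | (x, g) ∈ closure (Set.range fun n : ℤ => skewPow T f n (x, 1))}

/-- `𝒟(f) = {x : E_x(f) = P_x(f)}`. -/
def Dset (T : X ≃ₜ X) (f : X → G) : Set X :=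
  {x | essRange T f x = Pset T f x}

/-- Topological recurrence of the cocycle generated by `f`: for every open
neighbourhood `V` of the identity of `G` and every nonempty open `U ⊆ X` there is
`n ≠ 0` with `T⁻ⁿU ∩ U ∩ {x : f(n,x) ∈ V} ≠ ∅`. -/
def IsRecurrentCocycle (T : X ≃ₜ X) (f : X → G) : Prop :=
  ∀ V : Set G, IsOpen V → (1 : G) ∈ V → ∀ U : Set X, IsOpen U → U.Nonempty →
    ∃ n : ℤ, n ≠ 0 ∧ ∃ x ∈ U, (T.toEquiv ^ n) x ∈ U ∧ cocycle T f n x ∈ V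

/-- Minimality of a homeomorphism: every orbit is dense. -/
def IsMinimal (T : X ≃ₜ X) : Prop :=
  ∀ x : X, Dense (Set.range fun n : ℤ => (T.toEquiv ^ n) x)

/-- A consistent selection of subgroups for the cocycle generated by `f`: a family of
closed subgroups `H x ⊆ E_x(f)` with `H (Tⁿx) = f(n,x)·(H x)·f(n,x)⁻¹` depending
continuously on `x` for the Fell topology. -/
structure IsConsistentSelection (T : X ≃ₜ X) (f : X → G) (H : X → Subgroup G) : Prop where
  isClosed : ∀ x : X, IsClosed (H x : Set G)
  subset_essRange : ∀ x : X, (H x : Set G) ⊆ essRange T f x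
  conj : ∀ (x : X) (n : ℤ), (H ((T.toEquiv ^ n) x) : Set G) =
    (fun h => cocycle T f n x * h * (cocycle T f n x)⁻¹) '' (H x : Set G)
  fell_compact : ∀ (x : X) (K : Set G), IsCompact K → K ∩ (H x : Set G) = ∅ →
    ∃ W ∈ 𝓝 x, ∀ y ∈ W, K ∩ (H y : Set G) = ∅
  fell_open : ∀ (x : X) (O : Set G), IsOpen O → (O ∩ (H x : Set G)).Nonempty →
    ∃ W ∈ 𝓝 x, ∀ y ∈ W, (O ∩ (H y : Set G)).Nonempty

/-- The `T_f`-orbit closure of a point of `X × G`. -/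
def orbitClosure (T : X ≃ₜ X) (f : X → G) (p : X × G) : Set (X × G) :=
  closure (Set.range fun n : ℤ => skewPow T f n p)

/-- For `C ⊆ X × G`, the set `H = {g : C·g⁻¹ = C}`, where `C·g = {(y, c·g) : (y,c) ∈ C}`. -/
def stabSet (C : Set (X × G)) : Set G :=
  {g : G | (fun p : X × G => (p.1, p.2 * g⁻¹)) '' C = C}

/-- A strongly regular orbit closure: a `T_f`-orbit closure which projects onto all
of `X` and all of whose vertical sections are single left cosets of
`H = {g : C·g⁻¹ = C}`. -/
def IsStronglyRegularOC (T : X ≃ₜ X) (f : X → G) (C : Set (X × G)) : Prop :=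
  (∃ p : X × G, C = orbitClosure T f p) ∧ Prod.fst '' C = Set.univ ∧
    ∀ x : X, ∃ gx : G, {g : G | (x, g) ∈ C} = {gx} * stabSet C

/-- A strongly regular cocycle: one whose skew product admits a strongly regular
orbit closure. -/
def IsStronglyRegularCocycle (T : X ≃ₜ X) (f : X → G) : Prop :=
  ∃ C : Set (X × G), IsStronglyRegularOC T f C

/-- A regular cocycle: some `T_f`-orbit closure projects onto all of `X`. -/
def IsRegularCocycle (T : X ≃ₜ X) (f : X → G) : Prop :=
  ∃ p : X × G, Prod.fst '' orbitClosure T f p = Set.univ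

end Defs

namespace Homeomorph

variable {X : Type*} [TopologicalSpace X]

def toPerm : (X ≃ₜ X) →* Equiv.Perm X where
  toFun := Homeomorph.toEquiv
  map_one' := rfl
  map_mul' _ _ := rfl

theorem continuous_toEquiv_zpow (T : X ≃ₜ X) (n : ℤ) : Continuous ⇑(T.toEquiv ^ n) := by
  rw [show T.toEquiv ^ n = toPerm (T ^ n) from (map_zpow toPerm T n).symm]
  exact (T ^ n).continuous

theorem continuous_toEquiv_pow (T : X ≃ₜ X) (n : ℕ) : Continuous ⇑(T.toEquiv ^ n) := by
  simpa using T.continuous_toEquiv_zpow n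

end Homeomorph

theorem compl_union_mem_residual_of_subset_closure {X : Type*} [TopologicalSpace X]
    {B R : Set X} (hB : IsOpen B) (hR : IsOpen R) (hBR : B ⊆ closure (B ∩ R)) :
    Bᶜ ∪ R ∈ residual X := by
  refine mem_of_superset (coborder_mem_residual (hB.inter hR).isLocallyClosed) fun x hx => ?_
  by_cases hxB : x ∈ B
  · have hxBR : x ∈ B ∩ R := by simpa [coborder, hBR hxB] using hx
    exact Or.inr hxBR.2
  · exact Or.inl hxB

section Cocycle

variable {X : Type*} [TopologicalSpace X] {G : Type*} [Group G] (T : X ≃ₜ X) {f : X → G}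

variable (f) in
theorem cocycle_neg (n : ℤ) (x : X) :
    cocycle T f (-n) ((T.toEquiv ^ n) x) = (cocycle T f n x)⁻¹ := by
  rcases lt_trichotomy n 0 with h | rfl | h
  · rw [cocycle, cocycle, if_pos (by omega), if_neg (by omega), inv_inv]
  · simp [cocycle, cocycleNat]
  · rw [cocycle, cocycle, if_neg (by omega), if_pos h.le, neg_neg, zpow_neg,
      Equiv.Perm.inv_def, Equiv.symm_apply_apply]

variable [TopologicalSpace G]

theorem continuous_cocycleNat [ContinuousMul G] (hf : Continuous f) :
    ∀ n : ℕ, Continuous (cocycleNat T f n)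
  | 0 => continuous_const
  | n + 1 => (hf.comp (T.continuous_toEquiv_pow n)).mul (continuous_cocycleNat hf n)

theorem continuous_cocycle [ContinuousMul G] [ContinuousInv G] (hf : Continuous f) (n : ℤ) :
    Continuous (cocycle T f n) := by
  unfold cocycle
  split_ifs
  · exact continuous_cocycleNat T hf _
  · exact ((continuous_cocycleNat T hf _).comp (T.continuous_toEquiv_zpow n)).inv

variable {T} {P : ℤ → Prop}

theorem IsRecurrentCocycle.exists_return [ContinuousInv G] (hrec : IsRecurrentCocycle T f)
    (hP : ∀ n : ℤ, n ≠ 0 → P n ∨ P (-n)) {V : Set G} (hV : IsOpen V) (h1V : (1 : G) ∈ V)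
    {U : Set X} (hU : IsOpen U) (hUne : U.Nonempty) :
    ∃ n : ℤ, P n ∧ ∃ x ∈ U, (T.toEquiv ^ n) x ∈ U ∧ cocycle T f n x ∈ V := by
  obtain ⟨n, hn0, x, hxU, hnxU, hnxV⟩ :=
    hrec (V ∩ V⁻¹) (hV.inter hV.inv) ⟨h1V, by simpa using h1V⟩ U hU hUne
  rcases hP n hn0 with hn | hn
  · exact ⟨n, hn, x, hxU, hnxU, hnxV.1⟩
  · refine ⟨-n, hn, _, hnxU, ?_, ?_⟩
    · rwa [zpow_neg, Equiv.Perm.inv_def, Equiv.symm_apply_apply]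
    · rw [cocycle_neg]
      exact hnxV.2

theorem IsRecurrentCocycle.eventually_residual_exists_skewPow_mem [ContinuousMul G]
    [ContinuousInv G] (hf : Continuous f) (hrec : IsRecurrentCocycle T f)
    (hP : ∀ n : ℤ, n ≠ 0 → P n ∨ P (-n)) {B : Set X} (hB : IsOpen B) {V : Set G}
    (hV : IsOpen V) (h1V : (1 : G) ∈ V) :
    ∀ᶠ x in residual X, x ∈ B → ∃ n : ℤ, P n ∧ skewPow T f n (x, 1) ∈ B ×ˢ V := by
  set R := ⋃ (n : ℤ) (_ : P n), ⇑(T.toEquiv ^ n) ⁻¹' B ∩ cocycle T f n ⁻¹' V with hR_def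
  have hR : IsOpen R := isOpen_biUnion fun n _ =>
    (hB.preimage (T.continuous_toEquiv_zpow n)).inter (hV.preimage (continuous_cocycle T hf n))
  have hBR : B ⊆ closure (B ∩ R) := by
    intro x hxB
    refine mem_closure_iff.2 fun W hW hxW => ?_
    obtain ⟨n, hn, y, hy, hny, hnyV⟩ :=
      hrec.exists_return hP hV h1V (hW.inter hB) ⟨x, hxW, hxB⟩
    exact ⟨y, hy.1, hy.2, mem_biUnion hn ⟨hny.2, hnyV⟩⟩
  filter_upwards [compl_union_mem_residual_of_subset_closure hB hR hBR] with x hx hxB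
  obtain ⟨n, hnB, hn, hnV⟩ : ∃ n, (T.toEquiv ^ n) x ∈ B ∧ P n ∧ cocycle T f n x ∈ V := by
    simpa [hR_def] using hx.resolve_left (not_not_intro hxB)
  exact ⟨n, hn, hnB, by simpa [skewPow] using hnV⟩

theorem IsRecurrentCocycle.isMeagre_compl_mem_closure_skewPow [ContinuousMul G]
    [ContinuousInv G] [SecondCountableTopology X] [SecondCountableTopology G]
    (hf : Continuous f) (hrec : IsRecurrentCocycle T f) (hP : ∀ n : ℤ, n ≠ 0 → P n ∨ P (-n)) :
    IsMeagre {x : X | (x, (1 : G)) ∈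
      closure {p : X × G | ∃ n : ℤ, P n ∧ p = skewPow T f n (x, 1)}}ᶜ := by
  obtain ⟨bX, hbXc, -, hbX⟩ := TopologicalSpace.exists_countable_basis X
  obtain ⟨bG, hbGc, -, hbG⟩ := TopologicalSpace.exists_countable_basis G
  have hbasic : ∀ B ∈ bX, ∀ V ∈ bG, ∀ᶠ x in residual X,
      (x, (1 : G)) ∈ B ×ˢ V → ∃ n : ℤ, P n ∧ skewPow T f n (x, 1) ∈ B ×ˢ V := by
    intro B hB V hV
    by_cases h1V : (1 : G) ∈ V
    · filter_upwards [hrec.eventually_residual_exists_skewPow_mem hf hP (hbX.isOpen hB)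
        (hbG.isOpen hV) h1V] with x hx hxV using hx hxV.1
    · exact .of_forall fun x hxV => absurd hxV.2 h1V
  rw [IsMeagre, compl_compl]
  filter_upwards [(eventually_countable_ball hbXc).2 fun B hB =>
    (eventually_countable_ball hbGc).2 (hbasic B hB)] with x hx
  rw [(hbX.prod hbG).mem_closure_iff]
  rintro _ ⟨B, hB, V, hV, rfl⟩ hxBV
  obtain ⟨n, hn, hnBV⟩ := hx B hB V hV hxBV
  exact ⟨_, hnBV, n, hn, rfl⟩

end Cocycle

theorem statement_19_general
    {X : Type*} [TopologicalSpace X] [CompactSpace X] [TopologicalSpace.MetrizableSpace X]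
    {G : Type*} [TopologicalSpace G] [Group G] [IsTopologicalGroup G]
    [SecondCountableTopology G]
    (T : X ≃ₜ X) (f : X → G) (hf : Continuous f)
    (hrec : IsRecurrentCocycle T f) :
    IsMeagre {x : X | (x, (1 : G)) ∈
      closure {p : X × G | ∃ n : ℤ, 0 < n ∧ p = skewPow T f n (x, 1)}}ᶜ ∧
    IsMeagre {x : X | (x, (1 : G)) ∈
      closure {p : X × G | ∃ n : ℤ, n < 0 ∧ p = skewPow T f n (x, 1)}}ᶜ := by
  let _ := TopologicalSpace.metrizableSpaceMetric X
  exact ⟨hrec.isMeagre_compl_mem_closure_skewPow hf fun n _ => by omega,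
    hrec.isMeagre_compl_mem_closure_skewPow hf fun n _ => by omega⟩

theorem statement_19
    {X : Type*} [TopologicalSpace X] [CompactSpace X] [TopologicalSpace.MetrizableSpace X]
    {G : Type*} [TopologicalSpace G] [Group G] [IsTopologicalGroup G]
    [LocallyCompactSpace G] [SecondCountableTopology G] [T2Space G]
    (T : X ≃ₜ X) (hT : IsMinimal T) (f : X → G) (hf : Continuous f)
    (hrec : IsRecurrentCocycle T f) :
    IsMeagre {x : X | (x, (1 : G)) ∈
      closure {p : X × G | ∃ n : ℤ, 0 < n ∧ p = skewPow T f n (x, 1)}}ᶜ ∧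
    IsMeagre {x : X | (x, (1 : G)) ∈
      closure {p : X × G | ∃ n : ℤ, n < 0 ∧ p = skewPow T f n (x, 1)}}ᶜ :=
  statement_19_general T f hf hrec
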